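/- For every fixed R ∈ ℝ, the function p ↦ E(p,R) is monotonically nondecreasing on [0,1]; and for every fixed p ∈ [0,1], the function R ↦ E(p,R) is monotonically nonincreasing. -/

import Mathlib

/-!
Fix `γ ∈ [0, 1]` and put `a_y = P(y|0)^{1/(1+γ)}`, `b_y = P(y|1)^{1/(1+γ)}`. The sum
`S(p) = ∑_y a_y ((1-p) a_y + p b_y)^γ` inside the logarithm of `E_0` is concave in `p`, since
`t ↦ t^γ` is concave. It equals `∑_y P(y|0) = 1` at `p = 0`, and it is at most `1` on `[0, 1]`
by Hölder's inequality together with convexity of `t ↦ t^{1+γ}`. A concave function that is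
maximal at the left endpoint is nonincreasing, so `E_0(p, γ) = -log₂ S(p)` is nondecreasing
in `p`. Since `E_0` is continuous in `γ`, the supremum over the compact interval `[0, 1]` is
finite, and monotonicity passes to it; in `R` it is immediate because `γ ≥ 0`.
-/

open Finset

/-- Gallager-type function
`E_0(p,γ) = −log₂ Σ_y P(y|0)^{1/(1+γ)}·[(1−p)·P(y|0)^{1/(1+γ)} + p·P(y|1)^{1/(1+γ)}]^γ`. -/
noncomputable def gallagerE0 {𝒴 : Type} [Fintype 𝒴] (P : ZMod 2 → 𝒴 → ℝ)
    (p γ : ℝ) : ℝ :=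
  -Real.logb 2 (∑ y : 𝒴, P 0 y ^ ((1 : ℝ) / (1 + γ)) *
    ((1 - p) * P 0 y ^ ((1 : ℝ) / (1 + γ)) + p * P 1 y ^ ((1 : ℝ) / (1 + γ))) ^ γ)

/-- Partial error exponent `E(p,R) = max_{γ∈[0,1]} (E_0(p,γ) − γ·R)`. -/
noncomputable def partialErrorExponent {𝒴 : Type} [Fintype 𝒴] (P : ZMod 2 → 𝒴 → ℝ)
    (p R : ℝ) : ℝ :=
  sSup ((fun γ => gallagerE0 P p γ - γ * R) '' Set.Icc (0 : ℝ) 1)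

lemma concaveOn_sum {𝕜 E β ι : Type*} [Semiring 𝕜] [PartialOrder 𝕜] [AddCommMonoid E]
    [AddCommMonoid β] [PartialOrder β] [IsOrderedAddMonoid β] [SMul 𝕜 E] [DistribMulAction 𝕜 β]
    {s : Set E} {t : Finset ι} {f : ι → E → β} (hs : Convex 𝕜 s)
    (hf : ∀ i ∈ t, ConcaveOn 𝕜 s (f i)) : ConcaveOn 𝕜 s fun x => ∑ i ∈ t, f i x := by
  refine ⟨hs, fun x hx y hy a b ha hb hab => ?_⟩
  simp only [smul_sum, ← sum_add_distrib]
  exact sum_le_sum fun i hi => (hf i hi).2 hx hy ha hb hab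

lemma ConcaveOn.antitoneOn_of_isMaxOn {𝕜 : Type*} [Field 𝕜] [LinearOrder 𝕜]
    [IsStrictOrderedRing 𝕜] {s : Set 𝕜} {f : 𝕜 → 𝕜} {a : 𝕜} (hf : ConcaveOn 𝕜 s f) (ha : a ∈ s)
    (hmax : IsMaxOn f s a) : AntitoneOn f (s ∩ Set.Ici a) := by
  rintro x ⟨hx, hax⟩ y ⟨hy, -⟩ hxy
  obtain rfl | hax := eq_or_lt_of_le hax
  · exact hmax hy
  obtain rfl | hxy := eq_or_lt_of_le hxy
  · rfl
  have hslope := hf.slope_anti_adjacent ha hy hax hxy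
  have : (f y - f x) / (y - x) ≤ 0 :=
    hslope.trans (div_nonpos_of_nonpos_of_nonneg (sub_nonpos.2 (hmax hx)) (sub_pos.2 hax).le)
  rwa [div_le_iff₀ (sub_pos.2 hxy), zero_mul, sub_nonpos] at this

lemma sSup_image_le_sSup_image {α β : Type*} [ConditionallyCompleteLattice β] {s : Set α}
    {f g : α → β} (hs : s.Nonempty) (hg : BddAbove (g '' s)) (hfg : ∀ x ∈ s, f x ≤ g x) :
    sSup (f '' s) ≤ sSup (g '' s) :=
  csSup_le (hs.image f) <| by
    rintro _ ⟨x, hx, rfl⟩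
    exact (hfg x hx).trans (le_csSup hg ⟨x, hx, rfl⟩)

lemma one_sub_mul_add_mul_pos {a b p : ℝ} (ha : 0 < a) (hb : 0 < b)
    (hp : p ∈ Set.Icc (0 : ℝ) 1) : 0 < (1 - p) * a + p * b := by
  simpa only [smul_eq_mul, Set.mem_Ioi] using
    convex_Ioi (0 : ℝ) ha hb (sub_nonneg.2 hp.2) hp.1 (sub_add_cancel 1 p)

/-- Hölder's inequality for the exponents `1 + γ` and `(1 + γ) / γ`, obtained termwise from
Young's inequality. -/
lemma sum_rpow_mul_rpow_le_one {ι : Type*} {t : Finset ι} {u c : ι → ℝ} {γ : ℝ} (hγ : 0 ≤ γ)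
    (hu : ∀ i ∈ t, 0 ≤ u i) (hc : ∀ i ∈ t, 0 ≤ c i) (hu₁ : ∑ i ∈ t, u i = 1)
    (hc₁ : ∑ i ∈ t, c i ^ (1 + γ) ≤ 1) :
    ∑ i ∈ t, u i ^ (1 / (1 + γ)) * c i ^ γ ≤ 1 := by
  have h1γ : 0 < 1 + γ := by linarith
  have hw : 1 / (1 + γ) + γ / (1 + γ) = 1 := by field_simp
  have young : ∀ i ∈ t, u i ^ (1 / (1 + γ)) * c i ^ γ ≤
      1 / (1 + γ) * u i + γ / (1 + γ) * c i ^ (1 + γ) := by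
    intro i hi
    have hpow : (c i ^ (1 + γ)) ^ (γ / (1 + γ)) = c i ^ γ := by
      rw [← Real.rpow_mul (hc i hi), mul_div_cancel₀ _ h1γ.ne']
    rw [← hpow]
    exact Real.geom_mean_le_arith_mean2_weighted (by positivity) (by positivity) (hu i hi)
      (Real.rpow_nonneg (hc i hi) _) hw
  calc ∑ i ∈ t, u i ^ (1 / (1 + γ)) * c i ^ γ
      ≤ ∑ i ∈ t, (1 / (1 + γ) * u i + γ / (1 + γ) * c i ^ (1 + γ)) := sum_le_sum young
    _ = 1 / (1 + γ) * ∑ i ∈ t, u i + γ / (1 + γ) * ∑ i ∈ t, c i ^ (1 + γ) := by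
      rw [sum_add_distrib, mul_sum, mul_sum]
    _ ≤ 1 / (1 + γ) * 1 + γ / (1 + γ) * 1 := by rw [hu₁]; gcongr
    _ = 1 := by rw [mul_one, mul_one, hw]

noncomputable def gallagerSum {𝒴 : Type} [Fintype 𝒴] (P : ZMod 2 → 𝒴 → ℝ) (p γ : ℝ) : ℝ :=
  ∑ y : 𝒴, P 0 y ^ ((1 : ℝ) / (1 + γ)) *
    ((1 - p) * P 0 y ^ ((1 : ℝ) / (1 + γ)) + p * P 1 y ^ ((1 : ℝ) / (1 + γ))) ^ γ

section Gallager

variable {𝒴 : Type} [Fintype 𝒴] {P : ZMod 2 → 𝒴 → ℝ} {p γ : ℝ}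

lemma gallagerE0_eq_neg_logb_gallagerSum : gallagerE0 P p γ = -Real.logb 2 (gallagerSum P p γ) :=
  rfl

lemma gallagerSum_zero_left (hP : ∀ x y, 0 ≤ P x y) (hPsum : ∀ x, ∑ y : 𝒴, P x y = 1)
    (hγ : 0 ≤ γ) : gallagerSum P 0 γ = 1 := by
  have h1γ : 1 + γ ≠ 0 := by positivity
  rw [← hPsum 0]
  refine sum_congr rfl fun y _ => ?_
  rw [sub_zero, one_mul, zero_mul, add_zero, ← Real.rpow_one_add' (Real.rpow_nonneg (hP 0 y) _)
    (by positivity), one_div, Real.rpow_inv_rpow (hP 0 y) h1γ]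

lemma gallagerSum_le_one (hP : ∀ x y, 0 ≤ P x y) (hPsum : ∀ x, ∑ y : 𝒴, P x y = 1)
    (hp : p ∈ Set.Icc (0 : ℝ) 1) (hγ : 0 ≤ γ) : gallagerSum P p γ ≤ 1 := by
  have h1γ : 1 + γ ≠ 0 := by positivity
  set A : ZMod 2 → 𝒴 → ℝ := fun x y => P x y ^ ((1 : ℝ) / (1 + γ))
  have hA : ∀ x y, 0 ≤ A x y := fun x y => Real.rpow_nonneg (hP x y) _
  have hA_pow : ∀ x y, A x y ^ (1 + γ) = P x y := fun x y => by
    simp only [A]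
    rw [one_div, Real.rpow_inv_rpow (hP x y) h1γ]
  have hp₁ : 0 ≤ 1 - p := sub_nonneg.2 hp.2
  refine sum_rpow_mul_rpow_le_one hγ (fun y _ => hP 0 y)
    (fun y _ => add_nonneg (mul_nonneg hp₁ (hA 0 y)) (mul_nonneg hp.1 (hA 1 y))) (hPsum 0) ?_
  calc ∑ y : 𝒴, ((1 - p) * A 0 y + p * A 1 y) ^ (1 + γ)
      ≤ ∑ y : 𝒴, ((1 - p) * A 0 y ^ (1 + γ) + p * A 1 y ^ (1 + γ)) :=
        sum_le_sum fun y _ => (convexOn_rpow (by linarith)).2 (hA 0 y) (hA 1 y) hp₁ hp.1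
          (sub_add_cancel 1 p)
    _ = 1 := by simp only [hA_pow, sum_add_distrib, ← mul_sum, hPsum]; ring

lemma concaveOn_gallagerSum (hP : ∀ x y, 0 ≤ P x y) (hγ : γ ∈ Set.Icc (0 : ℝ) 1) :
    ConcaveOn ℝ (Set.Icc (0 : ℝ) 1) fun p => gallagerSum P p γ := by
  refine concaveOn_sum (convex_Icc 0 1) fun y _ => ?_
  set a := P 0 y ^ ((1 : ℝ) / (1 + γ))
  set b := P 1 y ^ ((1 : ℝ) / (1 + γ))
  have ha : 0 ≤ a := Real.rpow_nonneg (hP 0 y) _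
  have hb : 0 ≤ b := Real.rpow_nonneg (hP 1 y) _
  have hline : Set.Icc (0 : ℝ) 1 ⊆ AffineMap.lineMap a b ⁻¹' Set.Ici 0 := fun p hp => by
    simpa only [Set.mem_preimage, AffineMap.lineMap_apply_ring, Set.mem_Ici] using
      add_nonneg (mul_nonneg (sub_nonneg.2 hp.2) ha) (mul_nonneg hp.1 hb)
  have := (((Real.concaveOn_rpow hγ.1 hγ.2).comp_affineMap (AffineMap.lineMap a b)).subset
    hline (convex_Icc 0 1)).smul ha
  simpa only [Function.comp_apply, AffineMap.lineMap_apply_ring, smul_eq_mul] using this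

lemma antitoneOn_gallagerSum (hP : ∀ x y, 0 ≤ P x y) (hPsum : ∀ x, ∑ y : 𝒴, P x y = 1)
    (hγ : γ ∈ Set.Icc (0 : ℝ) 1) : AntitoneOn (fun p => gallagerSum P p γ) (Set.Icc 0 1) := by
  have hmax : IsMaxOn (fun p => gallagerSum P p γ) (Set.Icc 0 1) 0 := isMaxOn_iff.2 fun p hp => by
    simpa only [gallagerSum_zero_left hP hPsum hγ.1] using gallagerSum_le_one hP hPsum hp hγ.1
  exact ((concaveOn_gallagerSum hP hγ).antitoneOn_of_isMaxOn (Set.left_mem_Icc.2 zero_le_one)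
    hmax).mono fun p hp => ⟨hp, hp.1⟩

lemma gallagerSum_pos [Nonempty 𝒴] (hP : ∀ x y, 0 < P x y) (hp : p ∈ Set.Icc (0 : ℝ) 1) :
    0 < gallagerSum P p γ := by
  refine sum_pos (fun y _ => mul_pos (Real.rpow_pos_of_pos (hP 0 y) _) (Real.rpow_pos_of_pos
    (one_sub_mul_add_mul_pos (Real.rpow_pos_of_pos (hP 0 y) _) (Real.rpow_pos_of_pos (hP 1 y) _)
    hp) _)) univ_nonempty

lemma monotoneOn_gallagerE0 [Nonempty 𝒴] (hP : ∀ x y, 0 < P x y)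
    (hPsum : ∀ x, ∑ y : 𝒴, P x y = 1) (hγ : γ ∈ Set.Icc (0 : ℝ) 1) :
    MonotoneOn (fun p => gallagerE0 P p γ) (Set.Icc 0 1) := fun _ hp₁ _ hp₂ h => by
  simp only [gallagerE0_eq_neg_logb_gallagerSum]
  exact neg_le_neg <| Real.logb_le_logb_of_le one_lt_two (gallagerSum_pos hP hp₂)
    (antitoneOn_gallagerSum (fun x y => (hP x y).le) hPsum hγ hp₁ hp₂ h)

lemma continuousOn_gallagerE0 [Nonempty 𝒴] (hP : ∀ x y, 0 < P x y)
    (hp : p ∈ Set.Icc (0 : ℝ) 1) : ContinuousOn (fun γ => gallagerE0 P p γ) (Set.Ici 0) := by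
  have hS : ContinuousOn (fun γ => gallagerSum P p γ) (Set.Ici 0) := by
    unfold gallagerSum
    fun_prop (disch := intros; first
      | exact (hP _ _).ne'
      | exact (one_sub_mul_add_mul_pos (Real.rpow_pos_of_pos (hP _ _) _)
          (Real.rpow_pos_of_pos (hP _ _) _) hp).ne'
      | (rename_i hγ; exact (add_pos_of_pos_of_nonneg one_pos hγ).ne'))
  simp only [gallagerE0_eq_neg_logb_gallagerSum]
  exact (hS.logb fun γ _ => (gallagerSum_pos hP hp).ne').neg

lemma bddAbove_image_gallagerE0_sub [Nonempty 𝒴] (hP : ∀ x y, 0 < P x y)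
    (hp : p ∈ Set.Icc (0 : ℝ) 1) (R : ℝ) :
    BddAbove ((fun γ => gallagerE0 P p γ - γ * R) '' Set.Icc 0 1) :=
  isCompact_Icc.bddAbove_image <|
    ((continuousOn_gallagerE0 hP hp).mono Set.Icc_subset_Ici_self).sub (by fun_prop)

end Gallager

/-- For every fixed `R`, the function `p ↦ E(p,R)` is monotonically nondecreasing on
`[0,1]`; and for every fixed `p ∈ [0,1]`, the function `R ↦ E(p,R)` is monotonically
nonincreasing. -/
theorem partialErrorExponent_monotone
    (𝒴 : Type) [Fintype 𝒴]
    (P : ZMod 2 → 𝒴 → ℝ)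
    (hPpos : ∀ x y, 0 < P x y) (hPsum : ∀ x, ∑ y : 𝒴, P x y = 1) :
    (∀ R : ℝ, MonotoneOn (fun p => partialErrorExponent P p R) (Set.Icc (0 : ℝ) 1)) ∧
    (∀ p ∈ Set.Icc (0 : ℝ) 1, Antitone (fun R => partialErrorExponent P p R)) := by
  have : Nonempty 𝒴 := univ_nonempty_iff.1 <| nonempty_of_sum_ne_zero (f := P 0) <| by
    rw [hPsum 0]
    exact one_ne_zero
  have hIcc : (Set.Icc (0 : ℝ) 1).Nonempty := Set.nonempty_Icc.2 zero_le_one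
  refine ⟨fun R p₁ hp₁ p₂ hp₂ hp => ?_, fun p hp R₁ R₂ hR => ?_⟩
  · refine sSup_image_le_sSup_image hIcc (bddAbove_image_gallagerE0_sub hPpos hp₂ R) ?_
    exact fun γ hγ => sub_le_sub_right (monotoneOn_gallagerE0 hPpos hPsum hγ hp₁ hp₂ hp) _
  · refine sSup_image_le_sSup_image hIcc (bddAbove_image_gallagerE0_sub hPpos hp R₁) ?_
    exact fun γ hγ => sub_le_sub_left (mul_le_mul_of_nonneg_left hR hγ.1) _
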